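/- Under the plethysm p_t' = (q₁^t - 1)·p_t in the ring Λ = ℚ(q₁,q₂)[p₁,p₂,…] of symmetric functions, defining h_t' by the generating function identity 1 + ∑_{t≥1} h_t' x^{-t} = exp(∑_{t≥1} p_t' /(t x^t)), one has the identity h_t = ∑_{ε₁,…,ε_{t-1} ∈ {0,1}} q₁^{∑_{s: ε_s = 0} s} / ((q₁-1)(q₁²-1)⋯(q₁^t-1)) · s'_{(ε₁…ε_{t-1})}, where s'_ε are the ribbon skew Schur functions in the variables p_t' determined by s'_{(0^{t-1})} = h_t' and the multiplication rule s'_ε s'_{ε'} = s'_{ε0ε'} + s'_{ε1ε'}. -/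

import Mathlib

/- STATEMENT 5: in Λ = ℚ(q₁,q₂)[p₁,p₂,…], with h_t defined by
1 + ∑ h_t x^{-t} = exp(∑ p_t/(t xᵗ)), p'_t = (q₁ᵗ-1)p_t, h'_t defined by the
same generating identity from the p'_t, and s'_ε (ε a binary string) the ribbon
skew Schur functions of the plethysm, determined by s'_{(0^{t-1})} = h'_t and
s'_ε s'_{ε'} = s'_{ε0ε'} + s'_{ε1ε'}, one has for all t ≥ 1:
  h_t = ∑_{ε ∈ {0,1}^{t-1}} q₁^{∑_{s : ε_s = 0} s} / ((q₁-1)⋯(q₁ᵗ-1)) · s'_ε.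
The generating identities are encoded via their unique characterization in
characteristic zero: constant term 1 and H' = P'·H. -/

noncomputable section

abbrev K1 : Type := FractionRing (MvPolynomial (Fin 2) ℚ)

noncomputable def q₁ : K1 := algebraMap (MvPolynomial (Fin 2) ℚ) K1 (MvPolynomial.X 0)

abbrev Lam : Type := MvPolynomial ℕ K1

/-- the power sum p_t (t ≥ 1) -/
noncomputable def pp (t : ℕ) : Lam := MvPolynomial.X t

/-- the plethystically modified power sum p'_t = (q₁ᵗ - 1) p_t -/
noncomputable def pp' (t : ℕ) : Lam := MvPolynomial.C (q₁ ^ t - 1) * pp t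

/-!
Writing `H = ∑ hₜ xᵗ` and `H' = ∑ h'ₜ xᵗ`, the two differential equations show that
`H'(x) H(x)` and `H(q₁ x)` solve the same linear ODE, so `H'(x) H(x) = H(q₁ x)`, i.e.
`∑_{i+j=n} h'_{i+1} h_j = (q₁^{n+1} - 1) h_{n+1}`. For the partial sums
`T(m, b) = ∑_{ε ∈ {0,1}^m} q₁^{wt ε} s'_{ε 0^b}`, splitting off the last letter of `ε` and
applying the concatenation rule to `s'_ε · s'_{0^b}` gives
`T(m+1, b) = h'_{b+1} T(m, 0) + (q₁^{m+1} - 1) T(m, b+1)`, which is solved by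
`T(m, b) = ∏_{k ≤ m} (q₁^k - 1) ∑_{i+j=m} h'_{b+i+1} h_j`. At `b = 0` the convolution
identity turns this into `∏_{k ≤ m+1} (q₁^k - 1) h_{m+1}`.
-/

open PowerSeries Finset

namespace PowerSeries

variable {R : Type*}

theorem derivative_rescale [CommSemiring R] (a : R) (f : R⟦X⟧) :
    d⁄dX R (rescale a f) = C a * rescale a (d⁄dX R f) := by
  ext n : 1
  simp only [coeff_derivative, coeff_rescale, coeff_C_mul]
  ring

@[simp]
theorem constantCoeff_rescale [CommSemiring R] (a : R) (f : R⟦X⟧) :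
    constantCoeff (rescale a f) = constantCoeff f := by
  rw [← coeff_zero_eq_constantCoeff_apply, coeff_rescale, pow_zero, one_mul,
    coeff_zero_eq_constantCoeff_apply]

theorem eq_of_derivative_eq_mul [CommRing R] [IsAddTorsionFree R] {Q F G : R⟦X⟧}
    (hGunit : IsUnit (constantCoeff G)) (h0 : constantCoeff F = constantCoeff G)
    (hF : d⁄dX R F = Q * F) (hG : d⁄dX R G = Q * G) : F = G := by
  obtain ⟨u, rfl⟩ := isUnit_iff_constantCoeff.mpr hGunit
  suffices F * ↑u⁻¹ = 1 by simpa using congrArg (· * (u : R⟦X⟧)) this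
  apply derivative.ext
  · rw [Derivation.leibniz, derivative_inv, hF, hG, derivative_one, smul_eq_mul, smul_eq_mul]
    linear_combination (-(F * Q * ↑u⁻¹)) * u.inv_mul
  · rw [map_mul, h0, ← map_mul, u.mul_inv, map_one]

theorem mul_eq_rescale_of_derivative [CommRing R] [IsAddTorsionFree R] (q : R) {P H G : R⟦X⟧}
    (hH0 : constantCoeff H = 1) (hG0 : constantCoeff G = 1)
    (hH : d⁄dX R H = P * H) (hG : d⁄dX R G = (C q * rescale q P - P) * G) :
    G * H = rescale q H := by
  apply eq_of_derivative_eq_mul (Q := C q * rescale q P)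
  · simp [hH0]
  · simp [hH0, hG0]
  · rw [Derivation.leibniz, hH, hG, smul_eq_mul, smul_eq_mul]
    ring
  · rw [derivative_rescale, hH, map_mul]
    ring

theorem sum_antidiagonal_coeff_succ_mul_of_mul_eq_rescale [CommRing R] {q : R} {H G : R⟦X⟧}
    (hG0 : constantCoeff G = 1) (hGH : G * H = rescale q H) (n : ℕ) :
    ∑ p ∈ antidiagonal n, coeff (p.1 + 1) G * coeff p.2 H =
      (q ^ (n + 1) - 1) * coeff (n + 1) H := by
  have := congrArg (coeff (n + 1)) hGH
  rw [coeff_mul, Nat.sum_antidiagonal_succ, coeff_zero_eq_constantCoeff_apply, hG0,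
    coeff_rescale] at this
  linear_combination this

end PowerSeries

def ribbonWeight {n : ℕ} (ε : Fin n → Bool) : ℕ :=
  ∑ s ∈ univ.filter (fun s : Fin n => ε s = false), ((s : ℕ) + 1)

theorem ribbonWeight_snoc {n : ℕ} (ε : Fin n → Bool) (c : Bool) :
    ribbonWeight (Fin.snoc ε c) = ribbonWeight ε + if c = false then n + 1 else 0 := by
  simp [ribbonWeight, sum_filter, Fin.sum_univ_castSucc]

theorem List.ofFn_snoc {α : Type*} {n : ℕ} (ε : Fin n → α) (c : α) :
    List.ofFn (Fin.snoc ε c) = List.ofFn ε ++ [c] := by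
  rw [List.ofFn_succ_last]
  simp only [Fin.snoc_castSucc, Fin.snoc_last]

theorem Fin.sum_univ_fun_snoc {α M : Type*} [Fintype α] [AddCommMonoid M] {n : ℕ}
    (f : (Fin (n + 1) → α) → M) :
    ∑ ε, f ε = ∑ ε : Fin n → α, ∑ c, f (Fin.snoc ε c) := by
  rw [← (Fin.snocEquiv fun _ => α).sum_comp f, Fintype.sum_prod_type_right]
  rfl

section Ribbon

variable {R : Type*} [CommRing R] (q : R) (S : List Bool → R) {g h : ℕ → R}

def weightedRibbonSum (m b : ℕ) : R :=
  ∑ ε : Fin m → Bool, q ^ ribbonWeight ε * S (List.ofFn ε ++ List.replicate b false)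

variable {q S}

theorem weightedRibbonSum_succ (hS0 : ∀ t, S (List.replicate t false) = g (t + 1))
    (hSmul : ∀ ε ε', S ε * S ε' = S (ε ++ [false] ++ ε') + S (ε ++ [true] ++ ε'))
    (m b : ℕ) :
    weightedRibbonSum q S (m + 1) b =
      g (b + 1) * weightedRibbonSum q S m 0 +
        (q ^ (m + 1) - 1) * weightedRibbonSum q S m (b + 1) := by
  simp only [weightedRibbonSum, Fin.sum_univ_fun_snoc, Fintype.sum_bool, mul_sum,
    ← sum_add_distrib]
  refine sum_congr rfl fun ε _ => ?_
  have hmul := hSmul (List.ofFn ε) (List.replicate b false)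
  rw [hS0] at hmul
  simp only [ribbonWeight_snoc, List.ofFn_snoc, List.replicate_succ, List.append_assoc,
    List.singleton_append, List.replicate_zero, List.append_nil, Bool.true_eq_false, reduceIte,
    add_zero, pow_add] at hmul ⊢
  linear_combination (-q ^ ribbonWeight ε) * hmul

theorem weightedRibbonSum_eq (hS0 : ∀ t, S (List.replicate t false) = g (t + 1))
    (hSmul : ∀ ε ε', S ε * S ε' = S (ε ++ [false] ++ ε') + S (ε ++ [true] ++ ε'))
    (hh0 : h 0 = 1)
    (hgh : ∀ n, ∑ p ∈ antidiagonal n, g (p.1 + 1) * h p.2 = (q ^ (n + 1) - 1) * h (n + 1))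
    (m b : ℕ) :
    weightedRibbonSum q S m b =
      (∏ k ∈ Icc 1 m, (q ^ k - 1)) * ∑ p ∈ antidiagonal m, g (b + p.1 + 1) * h p.2 := by
  induction m generalizing b with
  | zero => simp [weightedRibbonSum, ribbonWeight, hS0, hh0]
  | succ m ih =>
    rw [weightedRibbonSum_succ hS0 hSmul, ih, ih, Nat.sum_antidiagonal_succ,
      prod_Icc_succ_top (by omega)]
    simp only [zero_add, add_zero] at hgh ⊢
    rw [hgh]
    simp only [show ∀ i, b + 1 + i + 1 = b + (i + 1) + 1 by omega]
    ring

theorem weightedRibbonSum_zero_right (hS0 : ∀ t, S (List.replicate t false) = g (t + 1))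
    (hSmul : ∀ ε ε', S ε * S ε' = S (ε ++ [false] ++ ε') + S (ε ++ [true] ++ ε'))
    (hh0 : h 0 = 1)
    (hgh : ∀ n, ∑ p ∈ antidiagonal n, g (p.1 + 1) * h p.2 = (q ^ (n + 1) - 1) * h (n + 1))
    (m : ℕ) :
    weightedRibbonSum q S m 0 = (∏ k ∈ Icc 1 (m + 1), (q ^ k - 1)) * h (m + 1) := by
  simp only [weightedRibbonSum_eq hS0 hSmul hh0 hgh, zero_add, hgh,
    prod_Icc_succ_top (Nat.le_add_left 1 m), mul_assoc]

end Ribbon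

theorem q₁_pow_sub_one_ne_zero {j : ℕ} (hj : j ≠ 0) : q₁ ^ j - 1 ≠ 0 := by
  rw [sub_ne_zero, q₁, ← map_pow, ← map_one (algebraMap (MvPolynomial (Fin 2) ℚ) K1),
    (IsFractionRing.injective (MvPolynomial (Fin 2) ℚ) K1).ne_iff]
  intro hX
  simpa [hj] using congrArg (MvPolynomial.eval 0) hX

theorem mk_pp'_eq_rescale :
    (PowerSeries.mk fun t => pp' (t + 1)) =
      C (MvPolynomial.C q₁) * rescale (MvPolynomial.C q₁) (PowerSeries.mk fun t => pp (t + 1)) -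
        PowerSeries.mk fun t => pp (t + 1) := by
  ext n : 1
  simp only [pp', map_sub, coeff_mk, coeff_C_mul, coeff_rescale, map_pow, map_one]
  ring

theorem statement5
    (h h' : ℕ → Lam) (hh0 : h 0 = 1) (hh'0 : h' 0 = 1)
    (hgen : PowerSeries.derivativeFun (PowerSeries.mk h) =
      (PowerSeries.mk fun t => pp (t + 1)) * PowerSeries.mk h)
    (hgen' : PowerSeries.derivativeFun (PowerSeries.mk h') =
      (PowerSeries.mk fun t => pp' (t + 1)) * PowerSeries.mk h')
    (S : List Bool → Lam)
    (hS0 : ∀ t : ℕ, S (List.replicate t false) = h' (t + 1))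
    (hSrule : ∀ ε ε' : List Bool,
      S ε * S ε' = S (ε ++ [false] ++ ε') + S (ε ++ [true] ++ ε')) :
    ∀ t : ℕ, 1 ≤ t →
      h t = ∑ ε : Fin (t - 1) → Bool,
        MvPolynomial.C
          ((q₁ ^ (∑ s ∈ Finset.univ.filter (fun s : Fin (t-1) => ε s = false), ((s : ℕ) + 1))) /
            (∏ j ∈ Finset.Icc 1 t, (q₁ ^ j - 1)))
          * S (List.ofFn ε) := by
  intro t ht
  obtain ⟨m, rfl⟩ : ∃ m, t = m + 1 := ⟨t - 1, by omega⟩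
  rw [mk_pp'_eq_rescale] at hgen'
  have hmul := mul_eq_rescale_of_derivative (MvPolynomial.C q₁) (by simpa using hh0)
    (by simpa using hh'0) hgen hgen'
  have hT := weightedRibbonSum_zero_right hS0 hSrule hh0
    (by simpa using
      sum_antidiagonal_coeff_succ_mul_of_mul_eq_rescale (by simpa using hh'0) hmul) m
  have hD : (∏ j ∈ Icc 1 (m + 1), (q₁ ^ j - 1)) ≠ 0 :=
    prod_ne_zero_iff.mpr fun j hj => q₁_pow_sub_one_ne_zero (by grind)
  simp only [← map_pow, ← map_one MvPolynomial.C, ← map_sub, ← map_prod] at hT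
  rw [← (isUnit_iff_ne_zero.mpr hD).map MvPolynomial.C |>.mul_right_inj, ← hT,
    weightedRibbonSum, mul_sum]
  refine sum_congr rfl fun ε _ => ?_
  rw [List.replicate_zero, List.append_nil, ← map_pow, ← mul_assoc, ← map_mul,
    mul_div_cancel₀ _ hD]
  rfl

end
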